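/- arXiv:1705.07774 — 2 statements merged into one kernel-verified Lean document; each statement's English description precedes it below -/
import Mathlib

section
/- Let f: R^d → R be μ-strongly convex and L-smooth with minimum f*. Consider iterates θ_{t+1} = θ_t − (1/L)(γ_t ⊙ g_t) where, conditional on θ_t, g_t has mean ∇f(θ_t) and element-wise variances σ_{t,i}², and γ_{t,i} = ∇f(θ_t)_i²/(∇f(θ_t)_i² + σ_{t,i}²). Then the conditional expected decrease satisfies E_t[f(θ_{t+1})] ≤ f(θ_t) − (1/(2L)) Σ_{i=1}^d ∇f(θ_t)_i⁴/(∇f(θ_t)_i² + σ_{t,i}²). -/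
/-! The descent lemma of an `L`-smooth `f` bounds `f θ'` by `f θ` plus a quadratic model of the
step that separates over the coordinates. Each coordinate term is a quadratic polynomial in `g_i`,
so its expectation involves only the mean `∇f_i` and the second moment `∇f_i² + σ_i²`; the gain
`γ_i = ∇f_i² / (∇f_i² + σ_i²)` minimises it, with value `-∇f_i⁴ / (2L (∇f_i² + σ_i²))`. -/

open MeasureTheory ProbabilityTheory

theorem le_add_inner_add_mul_norm_sq_of_lipschitz_gradient {E : Type*} [NormedAddCommGroup E]
    [InnerProductSpace ℝ E] [CompleteSpace E] {f : E → ℝ} {f' : E → E} {L : ℝ}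
    (hf : ∀ x, HasGradientAt f (f' x) x) (hf' : ∀ x y, ‖f' x - f' y‖ ≤ L * ‖x - y‖) (x v : E) :
    f (x + v) ≤ f x + inner ℝ (f' x) v + L / 2 * ‖v‖ ^ 2 := by
  set φ : ℝ → ℝ := fun t => f (x + t • v) - t * inner ℝ (f' x) v - L / 2 * t ^ 2 * ‖v‖ ^ 2
  have hφ : ∀ t, HasDerivAt φ
      (inner ℝ (f' (x + t • v)) v - inner ℝ (f' x) v - L * t * ‖v‖ ^ 2) t := by
    intro t
    have hline : HasDerivAt (fun t : ℝ => x + t • v) v t := by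
      simpa using ((hasDerivAt_id t).smul_const v).const_add x
    have hfline := (hf (x + t • v)).hasFDerivAt.comp_hasDerivAt t hline
    simp only [InnerProductSpace.toDual_apply_apply] at hfline
    have h := (hfline.sub ((hasDerivAt_id t).mul_const (inner ℝ (f' x) v))).sub
      (((hasDerivAt_pow 2 t).const_mul (L / 2)).mul_const (‖v‖ ^ 2))
    exact h.congr_deriv (by simp only [Nat.cast_ofNat, Nat.add_one_sub_one, pow_one]; ring)
  have hφ' : ∀ t, 0 ≤ t →
      inner ℝ (f' (x + t • v)) v - inner ℝ (f' x) v - L * t * ‖v‖ ^ 2 ≤ 0 := by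
    intro t ht
    calc inner ℝ (f' (x + t • v)) v - inner ℝ (f' x) v - L * t * ‖v‖ ^ 2
        = inner ℝ (f' (x + t • v) - f' x) v - L * t * ‖v‖ ^ 2 := by rw [inner_sub_left]
      _ ≤ ‖f' (x + t • v) - f' x‖ * ‖v‖ - L * t * ‖v‖ ^ 2 := by
          gcongr; exact real_inner_le_norm _ _
      _ ≤ L * ‖x + t • v - x‖ * ‖v‖ - L * t * ‖v‖ ^ 2 := by gcongr; exact hf' _ _
      _ = 0 := by
          rw [add_sub_cancel_left, norm_smul, Real.norm_of_nonneg ht]; ring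
  have hanti : AntitoneOn φ (Set.Icc 0 1) :=
    antitoneOn_of_hasDerivWithinAt_nonpos (convex_Icc 0 1)
      (HasDerivAt.continuousOn fun t _ => hφ t) (fun t _ => (hφ t).hasDerivWithinAt)
      (fun t ht => hφ' t (interior_subset ht).1)
  have := hanti (by norm_num) (by norm_num) zero_le_one
  simp only [φ] at this
  norm_num at this
  linarith

theorem EuclideanSpace.inner_add_mul_norm_sq {ι : Type*} [Fintype ι] (a v : EuclideanSpace ℝ ι)
    (c : ℝ) : inner ℝ a v + c * ‖v‖ ^ 2 = ∑ i, (a i * v i + c * v i ^ 2) := by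
  rw [EuclideanSpace.real_norm_sq_eq, PiLp.inner_apply, Finset.mul_sum, ← Finset.sum_add_distrib]
  simp [mul_comm]

section Moments

variable {Ω : Type*} [MeasurableSpace Ω] {P : Measure Ω} [IsProbabilityMeasure P] {X : Ω → ℝ}

theorem integral_sq_eq_integral_sub_sq_add_sq (hX : Integrable X P)
    (hX2 : Integrable (fun ω => X ω ^ 2) P) :
    ∫ ω, X ω ^ 2 ∂P = ∫ ω, (X ω - ∫ ω, X ω ∂P) ^ 2 ∂P + (∫ ω, X ω ∂P) ^ 2 := by
  have hX' : MemLp X 2 P := (memLp_two_iff_integrable_sq hX.1).2 hX2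
  rw [← variance_eq_integral hX'.aemeasurable, variance_eq_sub hX']
  simp

theorem integral_mul_add_mul_sq {m v : ℝ} (hX : Integrable X P)
    (hX2 : Integrable (fun ω => X ω ^ 2) P) (hm : ∫ ω, X ω ∂P = m)
    (hv : ∫ ω, (X ω - m) ^ 2 ∂P = v) (b c : ℝ) :
    ∫ ω, (b * X ω + c * X ω ^ 2) ∂P = b * m + c * (v + m ^ 2) := by
  rw [integral_add (hX.const_mul b) (hX2.const_mul c), integral_const_mul, integral_const_mul,
    integral_sq_eq_integral_sub_sq_add_sq hX hX2, hm, hv]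

end Moments

-- `x⁻¹ * x * x⁻¹ = x⁻¹` holds also at `x = 0`, so no case split on `L` or on `a² + σ²` is needed.
theorem quadratic_model_at_svag_gain (a σ L γ : ℝ) (hγ : γ = a ^ 2 / (a ^ 2 + σ ^ 2)) :
    -(1 / L) * (γ * a) * a + L / 2 * (1 / L * γ) ^ 2 * (σ ^ 2 + a ^ 2) =
      -(1 / (2 * L)) * (a ^ 4 / (a ^ 2 + σ ^ 2)) := by
  set s := a ^ 2 + σ ^ 2
  have hL : L⁻¹ * L * L⁻¹ = L⁻¹ := by simpa using mul_inv_mul_cancel L⁻¹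
  have hs : s⁻¹ * s * s⁻¹ = s⁻¹ := by simpa using mul_inv_mul_cancel s⁻¹
  rw [hγ, add_comm (σ ^ 2)]
  linear_combination (a ^ 4 / 2 * s⁻¹ * s * s⁻¹) * hL + (a ^ 4 / 2 * L⁻¹) * hs

theorem svag_step_decrease_general (d : ℕ) {Ω : Type*} [MeasurableSpace Ω]
    (P : Measure Ω) [IsProbabilityMeasure P]
    (f : EuclideanSpace ℝ (Fin d) → ℝ)
    (gradf : EuclideanSpace ℝ (Fin d) → EuclideanSpace ℝ (Fin d))
    (L : ℝ)
    (hgrad : ∀ x, HasGradientAt f (gradf x) x)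
    (hsm : ∀ x y, ‖gradf x - gradf y‖ ≤ L * ‖x - y‖)
    (θ : EuclideanSpace ℝ (Fin d)) (g : Ω → EuclideanSpace ℝ (Fin d)) (σ : Fin d → ℝ)
    (hint : ∀ i, Integrable (fun ω => g ω i) P)
    (hint2 : ∀ i, Integrable (fun ω => (g ω i) ^ 2) P)
    (hmean : ∀ i, ∫ ω, g ω i ∂P = gradf θ i)
    (hvar : ∀ i, ∫ ω, (g ω i - gradf θ i) ^ 2 ∂P = (σ i) ^ 2)
    (γ : Fin d → ℝ)
    (hγ : ∀ i, γ i = (gradf θ i) ^ 2 / ((gradf θ i) ^ 2 + (σ i) ^ 2))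
    (θ' : Ω → EuclideanSpace ℝ (Fin d))
    (hθ' : ∀ ω i, θ' ω i = θ i - (1 / L) * (γ i * g ω i))
    (hintf : Integrable (fun ω => f (θ' ω)) P) :
    ∫ ω, f (θ' ω) ∂P ≤
      f θ - (1 / (2 * L)) * ∑ i, (gradf θ i) ^ 4 / ((gradf θ i) ^ 2 + (σ i) ^ 2) := by
  set b : Fin d → ℝ := fun i => -(1 / L) * (γ i * gradf θ i)
  set c : Fin d → ℝ := fun i => L / 2 * (1 / L * γ i) ^ 2
  have hmodel : ∀ ω, f (θ' ω) ≤ f θ + ∑ i, (b i * g ω i + c i * g ω i ^ 2) := by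
    intro ω
    have h := le_add_inner_add_mul_norm_sq_of_lipschitz_gradient hgrad hsm θ (θ' ω - θ)
    rw [add_sub_cancel, add_assoc, EuclideanSpace.inner_add_mul_norm_sq] at h
    refine h.trans_eq (congrArg _ ?_)
    refine Finset.sum_congr rfl fun i _ => ?_
    simp only [b, c, PiLp.sub_apply, hθ']
    ring
  have hint_term : ∀ i, Integrable (fun ω => b i * g ω i + c i * g ω i ^ 2) P :=
    fun i => ((hint i).const_mul _).add ((hint2 i).const_mul _)
  have hint_sum : Integrable (fun ω => ∑ i, (b i * g ω i + c i * g ω i ^ 2)) P :=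
    integrable_finsetSum _ fun i _ => hint_term i
  calc ∫ ω, f (θ' ω) ∂P
      ≤ ∫ ω, (f θ + ∑ i, (b i * g ω i + c i * g ω i ^ 2)) ∂P :=
        integral_mono hintf ((integrable_const _).add hint_sum) hmodel
    _ = f θ + ∑ i, (b i * gradf θ i + c i * ((σ i) ^ 2 + (gradf θ i) ^ 2)) := by
        rw [integral_add (integrable_const _) hint_sum, integral_const, probReal_univ, one_smul,
          integral_finsetSum _ fun i _ => hint_term i]
        simp only [integral_mul_add_mul_sq (hint _) (hint2 _) (hmean _) (hvar _)]
    _ = _ := by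
        simp only [b, c, quadratic_model_at_svag_gain _ _ _ _ (hγ _), ← Finset.mul_sum]
        ring

/-- One step of idealized SVAG: with `γ_i = ∇f_i²/(∇f_i² + σ_i²)` and an unbiased
stochastic gradient `g` with element-wise variances `σ_i²`, the expected function value
after the update `θ' = θ − (1/L)(γ ⊙ g)` satisfies
`E[f(θ')] ≤ f(θ) − (1/(2L)) Σ_i ∇f_i⁴/(∇f_i² + σ_i²)`. -/
theorem svag_step_decrease (d : ℕ) {Ω : Type*} [MeasurableSpace Ω]
    (P : Measure Ω) [IsProbabilityMeasure P]
    (f : EuclideanSpace ℝ (Fin d) → ℝ)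
    (gradf : EuclideanSpace ℝ (Fin d) → EuclideanSpace ℝ (Fin d))
    (μ L : ℝ) (hμ : 0 < μ) (hL : 0 < L)
    (hgrad : ∀ x, HasGradientAt f (gradf x) x)
    (hsc : ∀ x y, f y ≥ f x + inner ℝ (gradf x) (y - x) + μ / 2 * ‖y - x‖ ^ 2)
    (hsm : ∀ x y, ‖gradf x - gradf y‖ ≤ L * ‖x - y‖)
    (θ : EuclideanSpace ℝ (Fin d)) (g : Ω → EuclideanSpace ℝ (Fin d)) (σ : Fin d → ℝ)
    (hint : ∀ i, Integrable (fun ω => g ω i) P)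
    (hint2 : ∀ i, Integrable (fun ω => (g ω i) ^ 2) P)
    (hmean : ∀ i, ∫ ω, g ω i ∂P = gradf θ i)
    (hvar : ∀ i, ∫ ω, (g ω i - gradf θ i) ^ 2 ∂P = (σ i) ^ 2)
    (γ : Fin d → ℝ)
    (hγ : ∀ i, γ i = (gradf θ i) ^ 2 / ((gradf θ i) ^ 2 + (σ i) ^ 2))
    (θ' : Ω → EuclideanSpace ℝ (Fin d))
    (hθ' : ∀ ω i, θ' ω i = θ i - (1 / L) * (γ i * g ω i))
    (hintf : Integrable (fun ω => f (θ' ω)) P) :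
    ∫ ω, f (θ' ω) ∂P ≤
      f θ - (1 / (2 * L)) * ∑ i, (gradf θ i) ^ 4 / ((gradf θ i) ^ 2 + (σ i) ^ 2) :=
  svag_step_decrease_general d P f gradf L hgrad hsm θ g σ hint hint2 hmean hvar γ hγ θ' hθ' hintf
end

section
/- Let f: R^d → R be μ-strongly convex and L-smooth with minimum f*. Run idealized SVAG: θ_{t+1} = θ_t − (1/L)(γ_t ⊙ g_t) with conditionally unbiased stochastic gradients g_t with element-wise variances σ_{t,i}², exact variance adaptation factors γ_{t,i} = ∇f_{t,i}²/(∇f_{t,i}² + σ_{t,i}²), and assume there exist constants c_v, M_v > 0 with Σ_i σ_{t,i}² ≤ c_v ‖∇f(θ_t)‖² + M_v for all t. Then E[f(θ_t) − f*] ∈ O(1/t). -/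
/-!
Write `∇ = ∇f(θ_t)`, `γ` for the adaptation factors and `e_t = E[f(θ_t) - f*]`. By the descent
lemma, `f(θ_{t+1}) ≤ f(θ_t) + (1/2L) ∑ᵢ (γᵢ² gᵢ² - 2 γᵢ ∇ᵢ gᵢ)`. Conditionally on `θ_t` we have
`E[gᵢ] = ∇ᵢ` and `E[gᵢ²] = σᵢ² + ∇ᵢ²`, and `γᵢ` is exactly the factor with
`γᵢ² (σᵢ² + ∇ᵢ²) = γᵢ ∇ᵢ²`, so in expectation the bracket equals `-γᵢ ∇ᵢ²`. By Cauchy–Schwarz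
(in the tangent-line form `a² / b ≥ 2κa - κ²b`, summed over coordinates and then integrated) and
the noise bound, the gain `E ∑ᵢ γᵢ ∇ᵢ²` is at least `(E‖∇‖²)² / ((1 + c_v) E‖∇‖² + M_v)`.
Together with `2μ e_t ≤ E‖∇‖² ≤ 2L e_t` this gives `e_{t+1} ≤ e_t - K e_t² / (A e_t + B)`, and such
a recursion forces `e_t = O(1/t)`.
-/

open MeasureTheory

section Smoothness

variable {E : Type*} [NormedAddCommGroup E] [InnerProductSpace ℝ E] {f : E → ℝ} {f' : E → E}

theorem le_add_inner_add_of_lipschitz_gradient [CompleteSpace E] {L : ℝ}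
    (hf : ∀ x, HasGradientAt f (f' x) x) (hf' : ∀ x y, ‖f' x - f' y‖ ≤ L * ‖x - y‖) (x y : E) :
    f y ≤ f x + inner ℝ (f' x) (y - x) + L / 2 * ‖y - x‖ ^ 2 := by
  set v := y - x
  -- `φ` is antitone on `[0, ∞)` because `f'` grows at most linearly along the ray `x + s • v`.
  set φ : ℝ → ℝ := fun s => f (x + s • v) - s * inner ℝ (f' x) v - L / 2 * s ^ 2 * ‖v‖ ^ 2
  have hφ : ∀ s, HasDerivAt φ (inner ℝ (f' (x + s • v) - f' x) v - L * s * ‖v‖ ^ 2) s := by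
    intro s
    have hline : HasDerivAt (fun s : ℝ => x + s • v) v s := by
      simpa using ((hasDerivAt_id s).smul_const v).const_add x
    have hfline := (hf (x + s • v)).hasFDerivAt.comp_hasDerivAt s hline
    simp only [InnerProductSpace.toDual_apply_apply] at hfline
    refine ((hfline.sub ((hasDerivAt_id s).mul_const (inner ℝ (f' x) v))).sub
      (((hasDerivAt_pow 2 s).const_mul (L / 2)).mul_const (‖v‖ ^ 2))).congr_deriv ?_
    simp only [inner_sub_left, Nat.cast_ofNat]
    ring
  have hanti : AntitoneOn φ (Set.Ici 0) := by
    refine antitoneOn_of_hasDerivWithinAt_nonpos (convex_Ici 0)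
      (fun s _ => (hφ s).continuousAt.continuousWithinAt)
      (fun s _ => (hφ s).hasDerivWithinAt) fun s hs => ?_
    rw [interior_Ici, Set.mem_Ioi] at hs
    have hlip : ‖f' (x + s • v) - f' x‖ ≤ L * (s * ‖v‖) := by
      simpa [norm_smul, abs_of_pos hs] using hf' (x + s • v) x
    nlinarith [real_inner_le_norm (f' (x + s • v) - f' x) v, norm_nonneg v,
      mul_le_mul_of_nonneg_right hlip (norm_nonneg v)]
  have h01 := hanti Set.self_mem_Ici (Set.mem_Ici.2 zero_le_one) zero_le_one
  simp only [φ, v, one_smul, add_sub_cancel, one_mul, one_pow, zero_smul, add_zero, zero_mul,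
    sub_zero, ne_eq, OfNat.ofNat_ne_zero, not_false_eq_true, zero_pow, mul_zero] at h01
  linarith

theorem norm_sq_le_two_mul_sub_of_lipschitz_gradient [CompleteSpace E] {L m : ℝ} (hL : 0 < L)
    (hf : ∀ x, HasGradientAt f (f' x) x) (hf' : ∀ x y, ‖f' x - f' y‖ ≤ L * ‖x - y‖)
    (hm : ∀ x, m ≤ f x) (x : E) : ‖f' x‖ ^ 2 ≤ 2 * L * (f x - m) := by
  have h := le_add_inner_add_of_lipschitz_gradient hf hf' x (x - L⁻¹ • f' x)
  rw [sub_sub_cancel_left, inner_neg_right, real_inner_smul_right, real_inner_self_eq_norm_sq,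
    norm_neg, norm_smul, Real.norm_of_nonneg (inv_nonneg.2 hL.le)] at h
  have hx := hm (x - L⁻¹ • f' x)
  have hsq : L / 2 * (L⁻¹ * ‖f' x‖) ^ 2 = L⁻¹ / 2 * ‖f' x‖ ^ 2 := by field_simp
  rw [hsq] at h
  have : L * L⁻¹ = 1 := mul_inv_cancel₀ hL.ne'
  nlinarith

theorem two_mul_sub_le_norm_sq_of_strongConvex {μ m : ℝ} (hμ : 0 < μ)
    (hf : ∀ x y, f x + inner ℝ (f' x) (y - x) + μ / 2 * ‖y - x‖ ^ 2 ≤ f y)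
    (hm : ∃ z, f z = m) (x : E) : 2 * μ * (f x - m) ≤ ‖f' x‖ ^ 2 := by
  obtain ⟨z, rfl⟩ := hm
  have h := hf x z
  have hcs := neg_le_of_abs_le (abs_real_inner_le_norm (f' x) (z - x))
  nlinarith [sq_nonneg (‖f' x‖ - μ * ‖z - x‖), norm_nonneg (z - x), norm_nonneg (f' x)]

end Smoothness

theorem continuous_of_norm_sub_le_mul {E F : Type*} [SeminormedAddCommGroup E]
    [SeminormedAddCommGroup F] {g : E → F} {L : ℝ} (h : ∀ x y, ‖g x - g y‖ ≤ L * ‖x - y‖) :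
    Continuous g :=
  (LipschitzWith.of_dist_le' fun x y => by simpa only [dist_eq_norm] using h x y).continuous

theorem integrable_norm_sq_comp_of_lipschitz_gradient {E Ω : Type*} [NormedAddCommGroup E]
    [InnerProductSpace ℝ E] [CompleteSpace E] [MeasurableSpace Ω] {P : Measure Ω}
    [IsFiniteMeasure P] {f : E → ℝ} {f' : E → E} {L m : ℝ} (hL : 0 < L)
    (hf : ∀ x, HasGradientAt f (f' x) x) (hf' : ∀ x y, ‖f' x - f' y‖ ≤ L * ‖x - y‖)
    (hm : ∀ x, m ≤ f x) {θ : Ω → E} (hθ : AEStronglyMeasurable θ P)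
    (hfθ : Integrable (fun ω => f (θ ω)) P) : Integrable (fun ω => ‖f' (θ ω)‖ ^ 2) P := by
  refine ((hfθ.sub (integrable_const m)).const_mul (2 * L)).mono'
    (((continuous_of_norm_sub_le_mul hf').comp_aestronglyMeasurable hθ).norm.pow 2)
    (ae_of_all _ fun ω => ?_)
  rw [Real.norm_of_nonneg (by positivity)]
  exact norm_sq_le_two_mul_sub_of_lipschitz_gradient hL hf hf' hm (θ ω)

theorem sq_apply_le_norm_sq {ι : Type*} [Fintype ι] (x : EuclideanSpace ℝ ι) (i : ι) :
    x i ^ 2 ≤ ‖x‖ ^ 2 := by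
  rw [EuclideanSpace.real_norm_sq_eq]
  exact Finset.single_le_sum (f := fun j => x j ^ 2) (fun j _ => sq_nonneg _) (Finset.mem_univ i)

theorem le_add_sum_of_coordinate_step {d : ℕ} {f : EuclideanSpace ℝ (Fin d) → ℝ}
    {f' : EuclideanSpace ℝ (Fin d) → EuclideanSpace ℝ (Fin d)} {L : ℝ} (hL : L ≠ 0)
    (hf : ∀ x, HasGradientAt f (f' x) x) (hf' : ∀ x y, ‖f' x - f' y‖ ≤ L * ‖x - y‖)
    {x x' : EuclideanSpace ℝ (Fin d)} (γ g : Fin d → ℝ)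
    (hx' : ∀ i, x' i = x i - 1 / L * (γ i * g i)) :
    f x' ≤ f x + 1 / (2 * L) * ∑ i, (γ i ^ 2 * g i ^ 2 - 2 * (γ i * f' x i * g i)) := by
  have hdiff : ∀ i, (x' - x) i = -(1 / L * (γ i * g i)) := fun i => by
    rw [PiLp.sub_apply, hx']; ring
  have hinner : inner ℝ (f' x) (x' - x) = ∑ i, f' x i * -(1 / L * (γ i * g i)) := by
    simp [PiLp.inner_apply, hdiff, mul_comm]
  have hnorm : ‖x' - x‖ ^ 2 = ∑ i, (1 / L * (γ i * g i)) ^ 2 := by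
    simp only [EuclideanSpace.real_norm_sq_eq, hdiff, neg_sq]
  have h := le_add_inner_add_of_lipschitz_gradient hf hf' x x'
  rw [hinner, hnorm] at h
  refine h.trans_eq ?_
  rw [Finset.mul_sum, Finset.mul_sum, add_assoc, ← Finset.sum_add_distrib]
  congr 1
  refine Finset.sum_congr rfl fun i _ => ?_
  field_simp
  ring

/-- The paper's `γ_{t,i}`, with gradient coordinate `m` and noise standard deviation `s`; it is `0`
(division by zero) when `m = s = 0`. -/
noncomputable def varianceAdaptationFactor (m s : ℝ) : ℝ := m ^ 2 / (m ^ 2 + s ^ 2)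

namespace varianceAdaptationFactor

theorem nonneg (m s : ℝ) : 0 ≤ varianceAdaptationFactor m s := by
  unfold varianceAdaptationFactor; positivity

theorem le_one (m s : ℝ) : varianceAdaptationFactor m s ≤ 1 :=
  div_le_one_of_le₀ (le_add_of_nonneg_right (sq_nonneg s)) (by positivity)

theorem sq_mul_add_sq (m s : ℝ) :
    varianceAdaptationFactor m s ^ 2 * (s ^ 2 + m ^ 2) = varianceAdaptationFactor m s * m ^ 2 := by
  unfold varianceAdaptationFactor
  rcases (add_nonneg (sq_nonneg m) (sq_nonneg s)).eq_or_lt with h | h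
  · simp [← h]
  · field_simp
    ring

theorem two_mul_sub_le_mul_sq (m s c : ℝ) :
    2 * c * m ^ 2 - c ^ 2 * (m ^ 2 + s ^ 2) ≤ varianceAdaptationFactor m s * m ^ 2 := by
  unfold varianceAdaptationFactor
  rcases (add_nonneg (sq_nonneg m) (sq_nonneg s)).eq_or_lt with h | h
  · have hm : m ^ 2 = 0 := by nlinarith [sq_nonneg s]
    have hs : s ^ 2 = 0 := by nlinarith [sq_nonneg m]
    simp [hm, hs]
  · rw [div_mul_eq_mul_div, le_div_iff₀ h]
    nlinarith [sq_nonneg (m ^ 2 - c * (m ^ 2 + s ^ 2))]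

theorem _root_.Measurable.varianceAdaptationFactor {Ω : Type*} {m : MeasurableSpace Ω}
    {D σ : Ω → ℝ} (hD : Measurable D) (hσ : Measurable σ) :
    Measurable fun ω => varianceAdaptationFactor (D ω) (σ ω) :=
  (hD.pow_const 2).div ((hD.pow_const 2).add (hσ.pow_const 2))

end varianceAdaptationFactor

theorem mul_natCast_mul_le_one_of_le_sub_mul_sq {e : ℕ → ℝ} {c : ℝ} (hc : 0 ≤ c)
    (he : ∀ t, 0 ≤ e t) (hrec : ∀ t, e (t + 1) ≤ e t - c * e t ^ 2) (t : ℕ) :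
    c * t * e t ≤ 1 := by
  induction t with
  | zero => simp
  | succ t ih =>
    have hu : 0 ≤ c * e t := mul_nonneg hc (he t)
    have hstep : c * (t + 1) * e (t + 1) ≤ (t + 1) * (c * e t - (c * e t) ^ 2) := by
      nlinarith [mul_le_mul_of_nonneg_left (hrec t) (by positivity : 0 ≤ c * ((t : ℝ) + 1))]
    push_cast
    refine hstep.trans ?_
    -- with `u = c e_t`: `1 - (t + 1) (u - u²) = (1 - t u)(1 - u) + u²`
    rcases le_or_gt (c * e t) 1 with h1 | h1
    · nlinarith [mul_nonneg (sub_nonneg.2 ih) (sub_nonneg.2 h1)]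
    · nlinarith [mul_nonneg (by positivity : (0 : ℝ) ≤ t + 1) (mul_nonneg hu (sub_nonneg.2 h1.le))]

theorem exists_le_div_of_le_sub_sq_div {e : ℕ → ℝ} {K A B : ℝ} (hK : 0 < K) (hA : 0 ≤ A)
    (hB : 0 < B) (he : ∀ t, 0 ≤ e t)
    (hrec : ∀ t, e (t + 1) ≤ e t - K * e t ^ 2 / (A * e t + B)) :
    ∃ C : ℝ, ∀ t : ℕ, 0 < t → e t ≤ C / t := by
  have hden : ∀ t, 0 < A * e t + B := fun t => by nlinarith [mul_nonneg hA (he t)]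
  have hanti : Antitone e := antitone_nat_of_succ_le fun t =>
    (hrec t).trans (sub_le_self _ (div_nonneg (by positivity) (hden t).le))
  -- freezing the denominator at `t = 0` reduces to `e (t+1) ≤ e t - c e t²`
  set c := K / (A * e 0 + B)
  have hc : 0 < c := div_pos hK (hden 0)
  have hrec' : ∀ t, e (t + 1) ≤ e t - c * e t ^ 2 := fun t => by
    refine (hrec t).trans (sub_le_sub_left ?_ _)
    rw [div_mul_eq_mul_div, mul_comm]
    exact div_le_div_of_nonneg_left (by positivity) (hden t)
      (by nlinarith [hanti (Nat.zero_le t)])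
  refine ⟨1 / c, fun t ht => ?_⟩
  rw [div_div, le_div_iff₀ (by positivity)]
  linarith [mul_natCast_mul_le_one_of_le_sub_mul_sq hc.le he hrec' t]

section CondExp

variable {Ω : Type*} {m mΩ : MeasurableSpace Ω} {P : Measure Ω} [IsFiniteMeasure P]

theorem integral_mul_eq_integral_mul_of_condExp_ae_eq (hm : m ≤ mΩ) {φ G H : Ω → ℝ}
    (hφ : StronglyMeasurable[m] φ) (hφG : Integrable (fun ω => φ ω * G ω) P)
    (hG : Integrable G P) (hGH : P[G|m] =ᵐ[P] H) :
    ∫ ω, φ ω * G ω ∂P = ∫ ω, φ ω * H ω ∂P := by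
  rw [← integral_condExp hm]
  refine integral_congr_ae ?_
  filter_upwards [condExp_mul_of_stronglyMeasurable_left hφ hφG hG, hGH] with ω h1 h2
  exact h1.trans (congrArg (φ ω * ·) h2)

theorem condExp_sq_ae_eq_add_sq (hm : m ≤ mΩ) {G D S : Ω → ℝ} (hD : StronglyMeasurable[m] D)
    (hG : MemLp G 2 P) (hD2 : MemLp D 2 P) (hmean : P[G|m] =ᵐ[P] D)
    (hvar : P[fun ω => (G ω - D ω) ^ 2|m] =ᵐ[P] S) :
    P[fun ω => G ω ^ 2|m] =ᵐ[P] fun ω => S ω + D ω ^ 2 := by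
  have hsq : Integrable (fun ω => (G ω - D ω) ^ 2) P := (hG.sub hD2).integrable_sq
  have hDG : Integrable ((fun ω => 2 * D ω) * G) P := (hD2.const_mul 2).integrable_mul hG
  have hDsq : P[fun ω => D ω ^ 2|m] = fun ω => D ω ^ 2 :=
    condExp_of_stronglyMeasurable hm (hD.pow 2) hD2.integrable_sq
  have hsplit : (fun ω => G ω ^ 2) =
      (fun ω => (G ω - D ω) ^ 2) + ((fun ω => 2 * D ω) * G - fun ω => D ω ^ 2) := by
    ext ω; simp only [Pi.add_apply, Pi.sub_apply, Pi.mul_apply]; ring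
  rw [hsplit]
  filter_upwards [condExp_add hsq (hDG.sub hD2.integrable_sq) m,
    condExp_sub hDG hD2.integrable_sq m,
    condExp_mul_of_stronglyMeasurable_left (hD.const_mul 2) hDG (hG.integrable one_le_two),
    hmean, hvar] with ω h1 h2 h3 h4 h5
  rw [h1, Pi.add_apply, h2, Pi.sub_apply, h3, Pi.mul_apply, h4, h5, hDsq]
  ring

theorem integral_adaptive_sq_sub_two_mul_eq_neg (hm : m ≤ mΩ) {G D σ : Ω → ℝ}
    (hD : Measurable[m] D) (hσ : Measurable[m] σ) (hG : MemLp G 2 P) (hD2 : MemLp D 2 P)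
    (hmean : P[G|m] =ᵐ[P] D) (hvar : P[fun ω => (G ω - D ω) ^ 2|m] =ᵐ[P] fun ω => σ ω ^ 2) :
    Integrable (fun ω => varianceAdaptationFactor (D ω) (σ ω) ^ 2 * G ω ^ 2
      - 2 * (varianceAdaptationFactor (D ω) (σ ω) * D ω * G ω)) P ∧
    ∫ ω, (varianceAdaptationFactor (D ω) (σ ω) ^ 2 * G ω ^ 2
      - 2 * (varianceAdaptationFactor (D ω) (σ ω) * D ω * G ω)) ∂P =
      -∫ ω, varianceAdaptationFactor (D ω) (σ ω) * D ω ^ 2 ∂P := by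
  set γ := fun ω => varianceAdaptationFactor (D ω) (σ ω)
  have hγ : Measurable[m] γ := hD.varianceAdaptationFactor hσ
  have hγ_bound : ∀ᵐ ω ∂P, ‖γ ω‖ ≤ 1 := ae_of_all _ fun ω => by
    rw [Real.norm_of_nonneg (varianceAdaptationFactor.nonneg _ _)]
    exact varianceAdaptationFactor.le_one _ _
  have hγ' : AEStronglyMeasurable γ P := (hγ.mono hm le_rfl).aestronglyMeasurable
  have hγG : Integrable (fun ω => γ ω ^ 2 * G ω ^ 2) P :=
    hG.integrable_sq.bdd_mul (hγ'.pow 2) (hγ_bound.mono fun ω h => by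
      rw [norm_pow]; exact pow_le_one₀ (norm_nonneg _) h)
  have hγDG : Integrable (fun ω => γ ω * D ω * G ω) P := by
    simpa only [mul_assoc, Pi.mul_apply] using (hD2.integrable_mul hG).bdd_mul hγ' hγ_bound
  have hsecond := integral_mul_eq_integral_mul_of_condExp_ae_eq hm
    (hγ.pow_const 2).stronglyMeasurable hγG hG.integrable_sq
    (condExp_sq_ae_eq_add_sq hm hD.stronglyMeasurable hG hD2 hmean hvar)
  have hfirst := integral_mul_eq_integral_mul_of_condExp_ae_eq hm (φ := fun ω => γ ω * D ω)
    (hγ.mul hD).stronglyMeasurable hγDG (hG.integrable one_le_two) hmean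
  refine ⟨hγG.sub (hγDG.const_mul 2), ?_⟩
  rw [integral_sub hγG (hγDG.const_mul 2), integral_const_mul, hsecond, hfirst]
  simp only [γ, varianceAdaptationFactor.sq_mul_add_sq, mul_assoc, ← sq]
  ring

end CondExp

theorem sq_integral_div_le_sum_integral_mul_sq {d : ℕ} {Ω : Type*} [MeasurableSpace Ω]
    {P : Measure Ω} [IsProbabilityMeasure P] {D : Ω → EuclideanSpace ℝ (Fin d)}
    {σ : Ω → Fin d → ℝ} {c M : ℝ} (hD : Measurable D) (hσ : ∀ i, Measurable fun ω => σ ω i)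
    (hD2 : Integrable (fun ω => ‖D ω‖ ^ 2) P)
    (hnoise : ∀ ω, ∑ i, σ ω i ^ 2 ≤ c * ‖D ω‖ ^ 2 + M) :
    (∫ ω, ‖D ω‖ ^ 2 ∂P) ^ 2 / ((1 + c) * ∫ ω, ‖D ω‖ ^ 2 ∂P + M) ≤
      ∑ i, ∫ ω, varianceAdaptationFactor (D ω i) (σ ω i) * D ω i ^ 2 ∂P := by
  set A := ∫ ω, ‖D ω‖ ^ 2 ∂P
  set Y := (1 + c) * A + M
  have hDi : ∀ i, Measurable fun ω => D ω i := fun i => by fun_prop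
  have hJ : ∀ i, Integrable (fun ω => varianceAdaptationFactor (D ω i) (σ ω i) * D ω i ^ 2) P :=
    fun i => hD2.mono' (((hDi i).varianceAdaptationFactor (hσ i)).mul
      ((hDi i).pow_const 2)).aestronglyMeasurable (ae_of_all _ fun ω => by
        rw [Real.norm_of_nonneg (mul_nonneg (varianceAdaptationFactor.nonneg _ _) (sq_nonneg _))]
        exact (mul_le_of_le_one_left (sq_nonneg _) (varianceAdaptationFactor.le_one _ _)).trans
          (sq_apply_le_norm_sq _ i))
  -- tangent-line bound `a² / b ≥ 2κa - κ²b` at the slope `κ = A / Y`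
  set κ := A / Y
  have hpt : ∀ ω, (2 * κ - κ ^ 2 * (1 + c)) * ‖D ω‖ ^ 2 - κ ^ 2 * M ≤
      ∑ i, varianceAdaptationFactor (D ω i) (σ ω i) * D ω i ^ 2 := fun ω => by
    have h := Finset.sum_le_sum fun i (_ : i ∈ Finset.univ) =>
      varianceAdaptationFactor.two_mul_sub_le_mul_sq (D ω i) (σ ω i) κ
    rw [Finset.sum_sub_distrib, ← Finset.mul_sum, ← Finset.mul_sum, Finset.sum_add_distrib,
      ← EuclideanSpace.real_norm_sq_eq] at h
    nlinarith [mul_le_mul_of_nonneg_left (hnoise ω) (sq_nonneg κ)]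
  have htangent : A ^ 2 / Y = 2 * κ * A - κ ^ 2 * Y := by
    rcases eq_or_ne Y 0 with hY | hY
    · simp [κ, hY]
    · simp only [κ]
      field_simp
      ring
  have hlin : ∫ ω, ((2 * κ - κ ^ 2 * (1 + c)) * ‖D ω‖ ^ 2 - κ ^ 2 * M) ∂P =
      2 * κ * A - κ ^ 2 * Y := by
    rw [integral_sub (hD2.const_mul _) (integrable_const _), integral_const_mul, integral_const,
      probReal_univ, one_smul]
    ring
  calc A ^ 2 / Y = ∫ ω, ((2 * κ - κ ^ 2 * (1 + c)) * ‖D ω‖ ^ 2 - κ ^ 2 * M) ∂P := by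
        rw [htangent, hlin]
    _ ≤ ∫ ω, ∑ i, varianceAdaptationFactor (D ω i) (σ ω i) * D ω i ^ 2 ∂P :=
      integral_mono ((hD2.const_mul _).sub (integrable_const _))
        (integrable_finsetSum _ fun i _ => hJ i) hpt
    _ = _ := integral_finsetSum _ fun i _ => hJ i

theorem integral_le_integral_sub_of_svag_step {d : ℕ} {Ω : Type*} [mΩ : MeasurableSpace Ω]
    {P : Measure Ω} [IsFiniteMeasure P] {f : EuclideanSpace ℝ (Fin d) → ℝ}
    {f' : EuclideanSpace ℝ (Fin d) → EuclideanSpace ℝ (Fin d)} {L fstar : ℝ} (hL : 0 < L)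
    (hf : ∀ x, HasGradientAt f (f' x) x) (hf' : ∀ x y, ‖f' x - f' y‖ ≤ L * ‖x - y‖)
    (hmin : ∀ x, fstar ≤ f x) {θ θ' g : Ω → EuclideanSpace ℝ (Fin d)} {σ : Ω → Fin d → ℝ}
    (hθ : Measurable θ) (hg : Measurable g)
    (hσ : ∀ i, Measurable[MeasurableSpace.comap θ inferInstance] fun ω => σ ω i)
    (hfθ : Integrable (fun ω => f (θ ω)) P) (hfθ' : Integrable (fun ω => f (θ' ω)) P)
    (hg2 : ∀ i, Integrable (fun ω => g ω i ^ 2) P)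
    (hmean : ∀ i, P[fun ω => g ω i | MeasurableSpace.comap θ inferInstance]
      =ᵐ[P] fun ω => f' (θ ω) i)
    (hvar : ∀ i, P[fun ω => (g ω i - f' (θ ω) i) ^ 2 | MeasurableSpace.comap θ inferInstance]
      =ᵐ[P] fun ω => σ ω i ^ 2)
    (hstep : ∀ ω i, θ' ω i =
      θ ω i - 1 / L * (varianceAdaptationFactor (f' (θ ω) i) (σ ω i) * g ω i)) :
    ∫ ω, f (θ' ω) ∂P ≤ ∫ ω, f (θ ω) ∂P - 1 / (2 * L) *
      ∑ i, ∫ ω, varianceAdaptationFactor (f' (θ ω) i) (σ ω i) * f' (θ ω) i ^ 2 ∂P := by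
  have hm : MeasurableSpace.comap θ inferInstance ≤ mΩ := hθ.comap_le
  have hD : ∀ i, Measurable[MeasurableSpace.comap θ inferInstance] fun ω => f' (θ ω) i :=
    fun i => (measurable_pi_apply i).comp ((WithLp.measurable_ofLp _ _).comp
      ((continuous_of_norm_sub_le_mul hf').measurable.comp (comap_measurable θ)))
  have hX := integrable_norm_sq_comp_of_lipschitz_gradient hL hf hf' hmin
    hθ.aestronglyMeasurable hfθ
  have hD2 : ∀ i, MemLp (fun ω => f' (θ ω) i) 2 P := fun i => by
    have hDi := ((hD i).mono hm le_rfl).aestronglyMeasurable (μ := P)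
    refine (memLp_two_iff_integrable_sq hDi).2 (hX.mono' (hDi.pow 2) (ae_of_all _ fun ω => ?_))
    rw [Real.norm_of_nonneg (sq_nonneg _)]
    exact sq_apply_le_norm_sq _ i
  have hG : ∀ i, MemLp (fun ω => g ω i) 2 P := fun i =>
    (memLp_two_iff_integrable_sq (by fun_prop : Measurable fun ω => g ω i).aestronglyMeasurable).2
      (hg2 i)
  have hterm := fun i =>
    integral_adaptive_sq_sub_two_mul_eq_neg hm (hD i) (hσ i) (hG i) (hD2 i) (hmean i) (hvar i)
  have hQ := integrable_finsetSum Finset.univ fun i _ => (hterm i).1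
  calc ∫ ω, f (θ' ω) ∂P
      ≤ ∫ ω, (f (θ ω) + 1 / (2 * L) * ∑ i,
          (varianceAdaptationFactor (f' (θ ω) i) (σ ω i) ^ 2 * g ω i ^ 2
            - 2 * (varianceAdaptationFactor (f' (θ ω) i) (σ ω i) * f' (θ ω) i * g ω i))) ∂P :=
        integral_mono hfθ' (hfθ.add (hQ.const_mul _)) fun ω =>
          le_add_sum_of_coordinate_step hL.ne' hf hf' _ _ (hstep ω)
    _ = _ := by
        rw [integral_add hfθ (hQ.const_mul _), integral_const_mul,
          integral_finsetSum _ fun i _ => (hterm i).1]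
        simp only [fun i => (hterm i).2, Finset.sum_neg_distrib]
        ring

theorem integral_sub_le_of_svag_step {d : ℕ} {Ω : Type*} [MeasurableSpace Ω]
    {P : Measure Ω} [IsProbabilityMeasure P] {f : EuclideanSpace ℝ (Fin d) → ℝ}
    {f' : EuclideanSpace ℝ (Fin d) → EuclideanSpace ℝ (Fin d)} {μ L fstar c M : ℝ}
    (hμ : 0 < μ) (hL : 0 < L) (hf : ∀ x, HasGradientAt f (f' x) x)
    (hsc : ∀ x y, f x + inner ℝ (f' x) (y - x) + μ / 2 * ‖y - x‖ ^ 2 ≤ f y)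
    (hf' : ∀ x y, ‖f' x - f' y‖ ≤ L * ‖x - y‖)
    (hmin : ∀ x, fstar ≤ f x) (hatt : ∃ x, f x = fstar)
    {θ θ' g : Ω → EuclideanSpace ℝ (Fin d)} {σ : Ω → Fin d → ℝ}
    (hθ : Measurable θ) (hg : Measurable g)
    (hσ : ∀ i, Measurable[MeasurableSpace.comap θ inferInstance] fun ω => σ ω i)
    (hfθ : Integrable (fun ω => f (θ ω)) P) (hfθ' : Integrable (fun ω => f (θ' ω)) P)
    (hg2 : ∀ i, Integrable (fun ω => g ω i ^ 2) P)
    (hmean : ∀ i, P[fun ω => g ω i | MeasurableSpace.comap θ inferInstance]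
      =ᵐ[P] fun ω => f' (θ ω) i)
    (hvar : ∀ i, P[fun ω => (g ω i - f' (θ ω) i) ^ 2 | MeasurableSpace.comap θ inferInstance]
      =ᵐ[P] fun ω => σ ω i ^ 2)
    (hstep : ∀ ω i, θ' ω i =
      θ ω i - 1 / L * (varianceAdaptationFactor (f' (θ ω) i) (σ ω i) * g ω i))
    (hc : 0 < c) (hM : 0 < M) (hnoise : ∀ ω, ∑ i, σ ω i ^ 2 ≤ c * ‖f' (θ ω)‖ ^ 2 + M) :
    ∫ ω, (f (θ' ω) - fstar) ∂P ≤ ∫ ω, (f (θ ω) - fstar) ∂P -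
      2 * μ ^ 2 / L * (∫ ω, (f (θ ω) - fstar) ∂P) ^ 2 /
        (2 * L * (1 + c) * ∫ ω, (f (θ ω) - fstar) ∂P + M) := by
  have hgap : ∀ {φ : Ω → EuclideanSpace ℝ (Fin d)}, Integrable (fun ω => f (φ ω)) P →
      ∫ ω, (f (φ ω) - fstar) ∂P = ∫ ω, f (φ ω) ∂P - fstar := fun h => by
    rw [integral_sub h (integrable_const _), integral_const, probReal_univ, one_smul]
  have hX := integrable_norm_sq_comp_of_lipschitz_gradient hL hf hf' hmin
    hθ.aestronglyMeasurable hfθ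
  set e := ∫ ω, (f (θ ω) - fstar) ∂P
  set A := ∫ ω, ‖f' (θ ω)‖ ^ 2 ∂P
  have he : 0 ≤ e := integral_nonneg fun ω => sub_nonneg.2 (hmin _)
  have hA_lower : 2 * μ * e ≤ A := by
    rw [← integral_const_mul]
    exact integral_mono ((hfθ.sub (integrable_const _)).const_mul _) hX fun ω =>
      two_mul_sub_le_norm_sq_of_strongConvex hμ hsc hatt (θ ω)
  have hA_upper : A ≤ 2 * L * e := by
    rw [← integral_const_mul]
    exact integral_mono hX ((hfθ.sub (integrable_const _)).const_mul _) fun ω =>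
      norm_sq_le_two_mul_sub_of_lipschitz_gradient hL hf hf' hmin (θ ω)
  have hdescent := integral_le_integral_sub_of_svag_step hL hf hf' hmin hθ hg hσ hfθ hfθ' hg2
    hmean hvar hstep
  have hgain := sq_integral_div_le_sum_integral_mul_sq (D := fun ω => f' (θ ω))
    ((continuous_of_norm_sub_le_mul hf').measurable.comp hθ)
    (fun i => (hσ i).mono hθ.comap_le le_rfl) hX hnoise
  have hbound : (2 * μ * e) ^ 2 / ((1 + c) * (2 * L * e) + M) ≤ A ^ 2 / ((1 + c) * A + M) :=
    div_le_div₀ (sq_nonneg _) (pow_le_pow_left₀ (by positivity) hA_lower 2)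
      (by nlinarith [(by positivity : 0 ≤ 2 * μ * e)]) (by nlinarith)
  have hrate : 2 * μ ^ 2 / L * e ^ 2 / (2 * L * (1 + c) * e + M) =
      1 / (2 * L) * ((2 * μ * e) ^ 2 / ((1 + c) * (2 * L * e) + M)) := by
    rw [show (1 + c) * (2 * L * e) = 2 * L * (1 + c) * e by ring]
    field_simp
  rw [hgap hfθ', hrate]
  have := mul_le_mul_of_nonneg_left (hbound.trans hgain) (by positivity : 0 ≤ 1 / (2 * L))
  linarith [hgap hfθ]

/-- Convergence of idealized SVAG: under `μ`-strong convexity and `L`-smoothness, with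
conditionally unbiased stochastic gradients, exact variance adaptation factors
`γ_{t,i} = ∇f_{t,i}²/(∇f_{t,i}² + σ_{t,i}²)`, step size `1/L`, and the noise bound
`Σ_i σ_{t,i}² ≤ c_v‖∇f(θ_t)‖² + M_v`, the expected suboptimality is `O(1/t)`. -/
theorem svag_convergence (d : ℕ) {Ω : Type*} [MeasurableSpace Ω]
    (P : Measure Ω) [IsProbabilityMeasure P]
    (f : EuclideanSpace ℝ (Fin d) → ℝ)
    (gradf : EuclideanSpace ℝ (Fin d) → EuclideanSpace ℝ (Fin d))
    (μ L : ℝ) (hμ : 0 < μ) (hL : 0 < L)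
    (hgrad : ∀ x, HasGradientAt f (gradf x) x)
    (hsc : ∀ x y, f y ≥ f x + inner ℝ (gradf x) (y - x) + μ / 2 * ‖y - x‖ ^ 2)
    (hsm : ∀ x y, ‖gradf x - gradf y‖ ≤ L * ‖x - y‖)
    (fstar : ℝ) (hmin : ∀ x, fstar ≤ f x) (hatt : ∃ x, f x = fstar)
    (θ : ℕ → Ω → EuclideanSpace ℝ (Fin d))
    (g : ℕ → Ω → EuclideanSpace ℝ (Fin d)) (σ : ℕ → Ω → Fin d → ℝ)
    (hmeasθ : ∀ t, Measurable (θ t)) (hmeasg : ∀ t, Measurable (g t))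
    (hmeasσ : ∀ t i, Measurable[MeasurableSpace.comap (θ t) inferInstance]
      (fun ω => σ t ω i))
    (hintf : ∀ t, Integrable (fun ω => f (θ t ω)) P)
    (hintg2 : ∀ t i, Integrable (fun ω => (g t ω i) ^ 2) P)
    -- conditionally unbiased stochastic gradients
    (hmean : ∀ t i,
      P[fun ω => g t ω i | MeasurableSpace.comap (θ t) inferInstance]
        =ᵐ[P] fun ω => gradf (θ t ω) i)
    -- conditional element-wise variances σ_{t,i}²
    (hvar : ∀ t i,
      P[fun ω => (g t ω i - gradf (θ t ω) i) ^ 2 | MeasurableSpace.comap (θ t) inferInstance]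
        =ᵐ[P] fun ω => (σ t ω i) ^ 2)
    -- SVAG update with exact variance adaptation factors and global step size 1/L
    (hstep : ∀ t ω i, θ (t + 1) ω i =
      θ t ω i - (1 / L) *
        ((gradf (θ t ω) i) ^ 2 / ((gradf (θ t ω) i) ^ 2 + (σ t ω i) ^ 2) * g t ω i))
    (c_v M_v : ℝ) (hc_v : 0 < c_v) (hM_v : 0 < M_v)
    (hnoise : ∀ t ω, ∑ i, (σ t ω i) ^ 2 ≤ c_v * ‖gradf (θ t ω)‖ ^ 2 + M_v) :
    ∃ C : ℝ, ∀ t : ℕ, 0 < t → ∫ ω, (f (θ t ω) - fstar) ∂P ≤ C / t := by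
  refine exists_le_div_of_le_sub_sq_div (K := 2 * μ ^ 2 / L) (A := 2 * L * (1 + c_v))
    (by positivity) (by positivity) hM_v (fun t => integral_nonneg fun ω => sub_nonneg.2 (hmin _))
    fun t => ?_
  exact integral_sub_le_of_svag_step hμ hL hgrad hsc hsm hmin hatt (hmeasθ t) (hmeasg t)
    (hmeasσ t) (hintf t) (hintf (t + 1)) (hintg2 t) (hmean t) (hvar t) (hstep t) hc_v hM_v
    (hnoise t)
end
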